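/- For γ ∈ [0,1], the collision frequency ν(v) = ∫_{ℝ³×S²} b(cos θ)|v−v_*|^γ μ(v_*) dσ dv_*, where b ∈ L^∞ is nonnegative with l_b = ∫_{S²} b(cos θ) dσ > 0, satisfies two-sided bounds: there exist constants 0 < ν_0 ≤ ν_1 such that ν_0(1+|v|^γ) ≤ ν(v) ≤ ν_1(1+|v|^γ) for all v ∈ ℝ³. -/

import Mathlib

open MeasureTheory
open scoped RealInnerProductSpace

/-- The standard Maxwellian on ℝ³. -/
noncomputable def gauss (v : EuclideanSpace ℝ (Fin 3)) : ℝ :=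
  (2 * Real.pi) ^ (-(3:ℝ)/2) * Real.exp (-‖v‖ ^ 2 / 2)

/-!
For a.e. `v_*` the vector `(v - v_*) / |v - v_*|` is a unit vector, so the angular integral is `l_b`
and `ν = l_b ∫ |v - x|^γ μ(x) dx`. For `γ ≤ 1` the map `t ↦ t^γ` is subadditive, so
`|v - x|^γ ≤ |v|^γ + |x|^γ` gives the upper bound. For the lower bound, `μ` is even, so `ν(v)` is also
`l_b ∫ |v + x|^γ μ(x) dx`, and `|v - x| + |v + x|` dominates both `|v|` and `|x|`. Hence `ν(v)` is
comparable to `|v|^γ ∫ μ + ∫ |x|^γ μ`, and both integrals are positive and finite.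
-/

theorem min_mul_one_add_le {a c t : ℝ} (ht : 0 ≤ t) : min a c * (1 + t) ≤ t * a + c := by
  nlinarith [min_le_left a c, min_le_right a c]

theorem le_max_mul_one_add {a c t : ℝ} (ht : 0 ≤ t) : t * a + c ≤ max a c * (1 + t) := by
  nlinarith [le_max_left a c, le_max_right a c]

section RpowNorm

variable {E : Type*} [SeminormedAddCommGroup E] {γ : ℝ}

theorem rpow_norm_sub_le_add (hγ0 : 0 ≤ γ) (hγ1 : γ ≤ 1) (v x : E) :
    ‖v - x‖ ^ γ ≤ ‖v‖ ^ γ + ‖x‖ ^ γ :=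
  (Real.rpow_le_rpow (norm_nonneg _) (norm_sub_le v x) hγ0).trans
    (Real.rpow_add_le_add_rpow (norm_nonneg _) (norm_nonneg _) hγ0 hγ1)

/-- `2 v` and `2 x` are the sum and the difference of `v + x` and `v - x`. -/
theorem rpow_norm_add_rpow_norm_le [NormedSpace ℝ E] (hγ0 : 0 ≤ γ) (hγ1 : γ ≤ 1) (v x : E) :
    ‖v‖ ^ γ + ‖x‖ ^ γ ≤ 2 * (‖v - x‖ ^ γ + ‖v + x‖ ^ γ) := by
  set s := ‖v - x‖ + ‖v + x‖
  have hv : ‖v‖ ≤ s := by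
    have := norm_add_le (v - x) (v + x)
    rw [show v - x + (v + x) = (2 : ℝ) • v by module, norm_smul] at this
    norm_num at this
    linarith [norm_nonneg v]
  have hx : ‖x‖ ≤ s := by
    have := norm_sub_le (v + x) (v - x)
    rw [show v + x - (v - x) = (2 : ℝ) • x by module, norm_smul] at this
    norm_num at this
    linarith [norm_nonneg x]
  have hs : s ^ γ ≤ ‖v - x‖ ^ γ + ‖v + x‖ ^ γ :=
    Real.rpow_add_le_add_rpow (norm_nonneg _) (norm_nonneg _) hγ0 hγ1
  linarith [Real.rpow_le_rpow (norm_nonneg _) hv hγ0, Real.rpow_le_rpow (norm_nonneg _) hx hγ0]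

end RpowNorm

section Convolution

variable {E : Type*} [NormedAddCommGroup E] [MeasurableSpace E]
  {μ : Measure E} {g : E → ℝ} {γ : ℝ}

theorem integrable_rpow_norm_add_rpow_norm_mul (hg : Integrable g μ)
    (hgγ : Integrable (fun x ↦ ‖x‖ ^ γ * g x) μ) (v : E) :
    Integrable (fun x ↦ (‖v‖ ^ γ + ‖x‖ ^ γ) * g x) μ := by
  simp only [add_mul]
  exact (hg.const_mul _).add hgγ

variable [BorelSpace E]

theorem integrable_rpow_norm_sub_mul (hγ0 : 0 ≤ γ) (hγ1 : γ ≤ 1) (hg0 : 0 ≤ g)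
    (hg : Integrable g μ) (hgγ : Integrable (fun x ↦ ‖x‖ ^ γ * g x) μ) (v : E) :
    Integrable (fun x ↦ ‖v - x‖ ^ γ * g x) μ := by
  refine (integrable_rpow_norm_add_rpow_norm_mul hg hgγ v).mono' ?_
    (Filter.Eventually.of_forall fun x ↦ ?_)
  · exact ((continuous_const.sub continuous_id).norm.rpow_const fun _ ↦ Or.inr hγ0)
      |>.aestronglyMeasurable.mul hg.aestronglyMeasurable
  · rw [Real.norm_of_nonneg (mul_nonneg (Real.rpow_nonneg (norm_nonneg _) _) (hg0 x))]
    exact mul_le_mul_of_nonneg_right (rpow_norm_sub_le_add hγ0 hγ1 v x) (hg0 x)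

theorem integral_rpow_norm_sub_mul_le (hγ0 : 0 ≤ γ) (hγ1 : γ ≤ 1) (hg0 : 0 ≤ g)
    (hg : Integrable g μ) (hgγ : Integrable (fun x ↦ ‖x‖ ^ γ * g x) μ) (v : E) :
    ∫ x, ‖v - x‖ ^ γ * g x ∂μ ≤ ‖v‖ ^ γ * ∫ x, g x ∂μ + ∫ x, ‖x‖ ^ γ * g x ∂μ := by
  rw [← integral_const_mul, ← integral_add (hg.const_mul _) hgγ]
  simp only [← add_mul]
  refine integral_mono (integrable_rpow_norm_sub_mul hγ0 hγ1 hg0 hg hgγ v)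
    (integrable_rpow_norm_add_rpow_norm_mul hg hgγ v) fun x ↦ ?_
  exact mul_le_mul_of_nonneg_right (rpow_norm_sub_le_add hγ0 hγ1 v x) (hg0 x)

theorem le_integral_rpow_norm_sub_mul [NormedSpace ℝ E] [μ.IsNegInvariant]
    (hγ0 : 0 ≤ γ) (hγ1 : γ ≤ 1) (hg0 : 0 ≤ g) (hg_even : ∀ x, g (-x) = g x)
    (hg : Integrable g μ) (hgγ : Integrable (fun x ↦ ‖x‖ ^ γ * g x) μ) (v : E) :
    (‖v‖ ^ γ * ∫ x, g x ∂μ + ∫ x, ‖x‖ ^ γ * g x ∂μ) / 4 ≤ ∫ x, ‖v - x‖ ^ γ * g x ∂μ := by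
  have hsub := integrable_rpow_norm_sub_mul hγ0 hγ1 hg0 hg hgγ v
  have hadd : Integrable (fun x ↦ ‖v + x‖ ^ γ * g x) μ := by
    simpa [hg_even] using hsub.comp_neg
  have hreflect : ∫ x, ‖v + x‖ ^ γ * g x ∂μ = ∫ x, ‖v - x‖ ^ γ * g x ∂μ := by
    simpa [hg_even] using integral_neg_eq_self (fun x ↦ ‖v - x‖ ^ γ * g x) μ
  have hmono : ∫ x, (‖v‖ ^ γ + ‖x‖ ^ γ) * g x ∂μ
      ≤ ∫ x, 2 * (‖v - x‖ ^ γ * g x + ‖v + x‖ ^ γ * g x) ∂μ := by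
    refine integral_mono (integrable_rpow_norm_add_rpow_norm_mul hg hgγ v)
      ((hsub.add hadd).const_mul 2) fun x ↦ ?_
    rw [← add_mul, ← mul_assoc]
    exact mul_le_mul_of_nonneg_right (rpow_norm_add_rpow_norm_le hγ0 hγ1 v x) (hg0 x)
  simp only [add_mul] at hmono
  rw [integral_add (hg.const_mul _) hgγ, integral_const_mul, integral_const_mul,
    integral_add hsub hadd, hreflect] at hmono
  linarith

end Convolution

theorem integral_angular_kernel_mul {E : Type*} [NormedAddCommGroup E] [InnerProductSpace ℝ E]
    [MeasurableSpace E] {μ ρ : Measure E} [NullSingletonClass μ] {b : ℝ → ℝ} {lb : ℝ}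
    (hlb : ∀ k : E, ‖k‖ = 1 → ∫ σ, b ⟪k, σ⟫ ∂ρ = lb) (v : E) (f : E → ℝ) :
    ∫ x, (∫ σ, b ⟪‖v - x‖⁻¹ • (v - x), σ⟫ * f x ∂ρ) ∂μ = lb * ∫ x, f x ∂μ := by
  rw [← integral_const_mul]
  refine integral_congr_ae ?_
  filter_upwards [compl_mem_ae_iff.2 (measure_singleton v)] with x hx
  have hunit : ‖‖v - x‖⁻¹ • (v - x)‖ = 1 := norm_smul_inv_norm (sub_ne_zero.2 (Ne.symm hx))
  rw [integral_mul_const, hlb _ hunit]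

section Maxwellian

abbrev E3 := EuclideanSpace ℝ (Fin 3)

theorem integrable_exp_neg_mul_sq_norm {V : Type*} [NormedAddCommGroup V]
    [InnerProductSpace ℝ V] [FiniteDimensional ℝ V] [MeasurableSpace V] [BorelSpace V]
    {c : ℝ} (hc : 0 < c) : Integrable fun x : V ↦ Real.exp (-c * ‖x‖ ^ 2) :=
  Integrable.of_integral_ne_zero <| by
    rw [GaussianFourier.integral_rexp_neg_mul_sq_norm hc]; positivity

theorem gauss_eq (v : E3) :
    gauss v = (2 * Real.pi) ^ (-(3:ℝ)/2) * Real.exp (-(1 / 2) * ‖v‖ ^ 2) := by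
  rw [gauss]; ring_nf

theorem gauss_pos (v : E3) : 0 < gauss v := by
  unfold gauss; positivity

theorem continuous_gauss : Continuous gauss := by
  unfold gauss; fun_prop

theorem gauss_neg (v : E3) : gauss (-v) = gauss v := by
  simp only [gauss, norm_neg]

theorem integrable_gauss : Integrable gauss :=
  ((integrable_exp_neg_mul_sq_norm one_half_pos).const_mul _).congr
    (ae_of_all _ fun v ↦ (gauss_eq v).symm)

theorem rpow_le_exp_sq_div_four {t γ : ℝ} (ht : 0 ≤ t) (hγ0 : 0 ≤ γ) (hγ1 : γ ≤ 1) :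
    t ^ γ ≤ Real.exp (t ^ 2 / 4) := by
  rcases le_total t 1 with h | h
  · exact (Real.rpow_le_one ht h hγ0).trans (Real.one_le_exp (by positivity))
  · -- `t ≤ 1 + t² / 4` is `(t / 2 - 1)² ≥ 0`
    nlinarith [Real.rpow_le_self_of_one_le h hγ1, Real.add_one_le_exp (t ^ 2 / 4),
      sq_nonneg (t / 2 - 1)]

theorem integrable_rpow_norm_mul_gauss {γ : ℝ} (hγ0 : 0 ≤ γ) (hγ1 : γ ≤ 1) :
    Integrable fun x : E3 ↦ ‖x‖ ^ γ * gauss x := by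
  refine ((integrable_exp_neg_mul_sq_norm (V := E3) (c := 1 / 4) (by norm_num)).const_mul
    ((2 * Real.pi) ^ (-(3:ℝ)/2))).mono'
    (((continuous_norm.rpow_const fun _ ↦ Or.inr hγ0).mul continuous_gauss).aestronglyMeasurable)
    (Filter.Eventually.of_forall fun x ↦ ?_)
  have hnonneg : 0 ≤ ‖x‖ ^ γ * gauss x :=
    mul_nonneg (Real.rpow_nonneg (norm_nonneg _) _) (gauss_pos x).le
  have hexp : Real.exp (‖x‖ ^ 2 / 4) * Real.exp (-(1 / 2) * ‖x‖ ^ 2)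
      = Real.exp (-(1 / 4) * ‖x‖ ^ 2) := by
    rw [← Real.exp_add]; ring_nf
  rw [Real.norm_of_nonneg hnonneg, gauss_eq, mul_left_comm, ← hexp]
  gcongr
  exact rpow_le_exp_sq_div_four (norm_nonneg x) hγ0 hγ1

theorem integral_gauss_pos : 0 < ∫ x, gauss x :=
  integral_pos_of_integrable_nonneg_nonzero (x := 0) continuous_gauss integrable_gauss
    (fun x ↦ (gauss_pos x).le) (gauss_pos 0).ne'

theorem integral_rpow_norm_mul_gauss_pos {γ : ℝ} (hγ0 : 0 ≤ γ) (hγ1 : γ ≤ 1) :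
    0 < ∫ x : E3, ‖x‖ ^ γ * gauss x := by
  obtain ⟨x, hx⟩ := exists_ne (0 : E3)
  exact integral_pos_of_integrable_nonneg_nonzero (x := x)
    ((continuous_norm.rpow_const fun _ ↦ Or.inr hγ0).mul continuous_gauss)
    (integrable_rpow_norm_mul_gauss hγ0 hγ1)
    (fun x ↦ mul_nonneg (Real.rpow_nonneg (norm_nonneg _) _) (gauss_pos x).le)
    (mul_pos (Real.rpow_pos_of_pos (norm_pos_iff.2 hx) _) (gauss_pos x)).ne'

end Maxwellian

theorem collision_frequency_bounds_general
    (γ : ℝ) (hγ0 : 0 ≤ γ) (hγ1 : γ ≤ 1)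
    (b : ℝ → ℝ)
    (lb : ℝ) (hlb : 0 < lb)
    (hlb_int : ∀ k : EuclideanSpace ℝ (Fin 3), ‖k‖ = 1 →
      (∫ σ in Metric.sphere (0 : EuclideanSpace ℝ (Fin 3)) 1, b ⟪k, σ⟫ ∂μH[2]) = lb)
    (ν : EuclideanSpace ℝ (Fin 3) → ℝ)
    (hν : ∀ v, ν v =
      ∫ vs, (∫ σ in Metric.sphere (0 : EuclideanSpace ℝ (Fin 3)) 1,
        b ⟪‖v - vs‖⁻¹ • (v - vs), σ⟫ * ‖v - vs‖ ^ γ * gauss vs ∂μH[2])) :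
    ∃ ν₀ ν₁ : ℝ, 0 < ν₀ ∧ ν₀ ≤ ν₁ ∧
      ∀ v, ν₀ * (1 + ‖v‖ ^ γ) ≤ ν v ∧ ν v ≤ ν₁ * (1 + ‖v‖ ^ γ) := by
  set I₀ := ∫ x, gauss x
  set Iγ := ∫ x : E3, ‖x‖ ^ γ * gauss x
  have hI₀ : 0 < I₀ := integral_gauss_pos
  have hIγ : 0 < Iγ := integral_rpow_norm_mul_gauss_pos hγ0 hγ1
  have hν_eq (v : E3) : ν v = lb * ∫ x, ‖v - x‖ ^ γ * gauss x := by
    simp only [hν v, mul_assoc]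
    exact integral_angular_kernel_mul hlb_int v _
  have hgauss0 : 0 ≤ gauss := fun x ↦ (gauss_pos x).le
  have hmoment := integrable_rpow_norm_mul_gauss hγ0 hγ1
  refine ⟨lb * min I₀ Iγ / 4, lb * max I₀ Iγ, by positivity, ?_, fun v ↦ ⟨?_, ?_⟩⟩
  · calc lb * min I₀ Iγ / 4 ≤ lb * min I₀ Iγ := div_le_self (by positivity) (by norm_num)
      _ ≤ lb * max I₀ Iγ := by gcongr; exact min_le_max
  all_goals
    have ht : 0 ≤ ‖v‖ ^ γ := Real.rpow_nonneg (norm_nonneg _) _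
    rw [hν_eq]
  · calc lb * min I₀ Iγ / 4 * (1 + ‖v‖ ^ γ) = lb * (min I₀ Iγ * (1 + ‖v‖ ^ γ) / 4) := by ring
      _ ≤ lb * ((‖v‖ ^ γ * I₀ + Iγ) / 4) := by gcongr; exact min_mul_one_add_le ht
      _ ≤ _ := by
        gcongr
        exact le_integral_rpow_norm_sub_mul hγ0 hγ1 hgauss0 gauss_neg integrable_gauss hmoment v
  · calc _ ≤ lb * (‖v‖ ^ γ * I₀ + Iγ) := by
          gcongr
          exact integral_rpow_norm_sub_mul_le hγ0 hγ1 hgauss0 integrable_gauss hmoment v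
      _ ≤ lb * (max I₀ Iγ * (1 + ‖v‖ ^ γ)) := by gcongr; exact le_max_mul_one_add ht
      _ = _ := by ring

/-- Two-sided bounds `ν₀(1+|v|^γ) ≤ ν(v) ≤ ν₁(1+|v|^γ)` for the collision frequency
with hard potential `γ ∈ [0,1]` and bounded angular kernel `b` with positive mass `l_b`
on the sphere (equipped with the two-dimensional Hausdorff measure). -/
theorem collision_frequency_bounds
    (γ : ℝ) (hγ0 : 0 ≤ γ) (hγ1 : γ ≤ 1)
    (b : ℝ → ℝ) (hb_meas : Measurable b) (hb_nonneg : ∀ x, 0 ≤ b x)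
    (bBdd : ℝ) (hb_bdd : ∀ x, b x ≤ bBdd)
    (lb : ℝ) (hlb : 0 < lb)
    (hlb_int : ∀ k : EuclideanSpace ℝ (Fin 3), ‖k‖ = 1 →
      (∫ σ in Metric.sphere (0 : EuclideanSpace ℝ (Fin 3)) 1, b ⟪k, σ⟫ ∂μH[2]) = lb)
    (ν : EuclideanSpace ℝ (Fin 3) → ℝ)
    (hν : ∀ v, ν v =
      ∫ vs, (∫ σ in Metric.sphere (0 : EuclideanSpace ℝ (Fin 3)) 1,
        b ⟪‖v - vs‖⁻¹ • (v - vs), σ⟫ * ‖v - vs‖ ^ γ * gauss vs ∂μH[2])) :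
    ∃ ν₀ ν₁ : ℝ, 0 < ν₀ ∧ ν₀ ≤ ν₁ ∧
      ∀ v, ν₀ * (1 + ‖v‖ ^ γ) ≤ ν v ∧ ν v ≤ ν₁ * (1 + ‖v‖ ^ γ) :=
  collision_frequency_bounds_general γ hγ0 hγ1 b lb hlb hlb_int ν hν
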